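/- The function u(φ) = sin(φ)/b + (m/(2b⁴))·(γ + 1/(1 − ωₑ²/ω₀²))·(1 − cos φ)·(2b² + J₂R²(1 − cos φ)) satisfies, to first order in m, the orbital equation (du/dφ)² = 1/b² − u² + (m·u/b²)·(2 + J₂R²u²)·(γ + 1/(1 − ωₑ²/ω₀²)) with initial condition u(0) = 0. Precisely: writing u = u₀ + m·u₁ with u₀(φ) = sin(φ)/b, the given u₁ satisfies the linearized ODE 2u₀'u₁' + 2u₀u₁ = (u₀/b²)(2 + J₂R²u₀²)·(γ + 1/(1 − ωₑ²/ω₀²)) with u₁(0) = 0. -/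

import Mathlib

open Real

theorem hasDerivAt_mul_one_sub_cos_mul_add (A B C φ : ℝ) :
    HasDerivAt (fun φ => A * (1 - cos φ) * (B + C * (1 - cos φ)))
      (A * sin φ * (B + 2 * C * (1 - cos φ))) φ := by
  have h : HasDerivAt (fun φ => 1 - cos φ) (sin φ) φ := by
    simpa using (hasDerivAt_cos φ).const_sub 1
  exact ((h.const_mul A).mul ((h.const_mul C).const_add B)).congr_deriv (by ring)

theorem linearized_orbit_identity {b s c : ℝ} (hb : b ≠ 0) (hsc : s ^ 2 + c ^ 2 = 1)
    (K J₂ R : ℝ) :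
    2 * (c / b) * (K / (2 * b ^ 4) * s * (2 * b ^ 2 + 2 * (J₂ * R ^ 2) * (1 - c)))
        + 2 * (s / b) * (K / (2 * b ^ 4) * (1 - c) * (2 * b ^ 2 + J₂ * R ^ 2 * (1 - c)))
      = s / b / b ^ 2 * (2 + J₂ * R ^ 2 * (s / b) ^ 2) * K := by
  field_simp
  linear_combination (-K * s * J₂ * R ^ 2) * hsc

theorem linearized_orbit_equation_PPN_plasma_general
    (b γ J₂ R ωe ω₀ : ℝ) (hb : 0 < b) :
    let K : ℝ := γ + 1 / (1 - ωe ^ 2 / ω₀ ^ 2)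
    let u₀ : ℝ → ℝ := fun φ => Real.sin φ / b
    let u₁ : ℝ → ℝ := fun φ =>
      (K / (2 * b ^ 4)) * (1 - Real.cos φ) * (2 * b ^ 2 + J₂ * R ^ 2 * (1 - Real.cos φ))
    (∀ φ : ℝ, 2 * deriv u₀ φ * deriv u₁ φ + 2 * u₀ φ * u₁ φ
        = (u₀ φ / b ^ 2) * (2 + J₂ * R ^ 2 * (u₀ φ) ^ 2) * K) ∧ u₁ 0 = 0 := by
  intro K u₀ u₁
  refine ⟨fun φ => ?_, by simp [u₁]⟩
  rw [((hasDerivAt_sin φ).div_const b).deriv,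
    (hasDerivAt_mul_one_sub_cos_mul_add _ _ _ φ).deriv]
  exact linearized_orbit_identity hb.ne' (sin_sq_add_cos_sq φ) K J₂ R

/-- The first-order correction `u₁` to the flat orbit `u₀(φ) = sin φ / b` satisfies the
linearized orbital ODE `2u₀'u₁' + 2u₀u₁ = (u₀/b²)(2 + J₂R²u₀²)·K` with `u₁(0) = 0`,
where `K = γ + 1/(1 - ωₑ²/ω₀²)`. -/
theorem linearized_orbit_equation_PPN_plasma
    (b m γ J₂ R ωe ω₀ : ℝ) (hb : 0 < b) (hωe : 0 ≤ ωe) (hω : ωe < ω₀) :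
    let K : ℝ := γ + 1 / (1 - ωe ^ 2 / ω₀ ^ 2)
    let u₀ : ℝ → ℝ := fun φ => Real.sin φ / b
    let u₁ : ℝ → ℝ := fun φ =>
      (K / (2 * b ^ 4)) * (1 - Real.cos φ) * (2 * b ^ 2 + J₂ * R ^ 2 * (1 - Real.cos φ))
    (∀ φ : ℝ, 2 * deriv u₀ φ * deriv u₁ φ + 2 * u₀ φ * u₁ φ
        = (u₀ φ / b ^ 2) * (2 + J₂ * R ^ 2 * (u₀ φ) ^ 2) * K) ∧ u₁ 0 = 0 :=
  linearized_orbit_equation_PPN_plasma_general b γ J₂ R ωe ω₀ hb
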